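/- arXiv:2404.01005 — 2 statements merged into one kernel-verified Lean document; each statement's English description precedes it below -/
import Mathlib

section
/- Let η(ξ) = ∫₀^∞ (4t/τ²)e^{-2t/τ} φ(ξ+ct) dt and ζ(ξ) = ∫₀^∞ (4/τ)e^{-2t/τ} φ(ξ+ct) dt for a bounded continuously differentiable function φ, with c, τ > 0. Then η'(ξ) = (1/(cτ))(2η(ξ) - ζ(ξ)) and ζ'(ξ) = (1/(cτ))(2ζ(ξ) - 4φ(ξ)). -/
/-!
Differentiating under the integral sign gives `∫ w(t) φ'(x + ct) dt`, and since
`∂ₜ φ(x + ct) = c φ'(x + ct)`, an integration by parts in `t` turns this into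
`-(w(0) φ(x) + ∫ w'(t) φ(x + ct) dt) / c`. The two kernels `w_η(t) = 4t/τ² e^{-2t/τ}` and
`w_ζ(t) = 4/τ e^{-2t/τ}` satisfy `w_ζ' = -(2/τ) w_ζ` and `w_η' = w_ζ/τ - (2/τ) w_η`, with
`w_η(0) = 0` and `w_ζ(0) = 4/τ`, which gives both formulas.
-/

open MeasureTheory Set Filter Real Topology

section KernelIntegral

variable {α : Type*} [MeasurableSpace α] {μ : Measure α} {w g : α → ℝ} {φ : ℝ → ℝ} {M M' : ℝ}

theorem integrable_mul_comp_const_add (hw : Integrable w μ) (hg : AEMeasurable g μ)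
    (hφ : Measurable φ) (hφM : ∀ x, |φ x| ≤ M) (x : ℝ) :
    Integrable (fun a => w a * φ (x + g a)) μ :=
  hw.mul_bdd (hφ.comp_aemeasurable (hg.const_add x)).aestronglyMeasurable
    (ae_of_all _ fun _ => (Real.norm_eq_abs _).trans_le (hφM _))

theorem hasDerivAt_integral_mul_comp_const_add (hw : Integrable w μ) (hg : AEMeasurable g μ)
    (hφ : Differentiable ℝ φ) (hφM : ∀ x, |φ x| ≤ M) (hφ'M : ∀ x, |deriv φ x| ≤ M') (x₀ : ℝ) :
    HasDerivAt (fun x => ∫ a, w a * φ (x + g a) ∂μ) (∫ a, w a * deriv φ (x₀ + g a) ∂μ) x₀ := by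
  refine (hasDerivAt_integral_of_dominated_loc_of_deriv_le (bound := fun a => |w a| * M')
    (F' := fun x a => w a * deriv φ (x + g a)) univ_mem ?_
    (integrable_mul_comp_const_add hw hg hφ.continuous.measurable hφM x₀)
    (integrable_mul_comp_const_add hw hg (measurable_deriv φ) hφ'M x₀).aestronglyMeasurable
    ?_ (hw.abs.mul_const M') ?_).2
  · exact .of_forall fun x =>
      (integrable_mul_comp_const_add hw hg hφ.continuous.measurable hφM x).aestronglyMeasurable
  · refine ae_of_all _ fun a x _ => ?_
    rw [Real.norm_eq_abs, abs_mul]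
    exact mul_le_mul_of_nonneg_left (hφ'M _) (abs_nonneg _)
  · refine ae_of_all _ fun a x _ => ?_
    simpa using ((hφ _).hasDerivAt.comp x ((hasDerivAt_id x).add_const (g a))).const_mul (w a)

end KernelIntegral

section HalfLine

variable {w w' φ : ℝ → ℝ} {c M M' : ℝ}

theorem integrableOn_Ioi_mul_comp_const_add_mul (hw : IntegrableOn w (Ioi 0))
    (hφ : Measurable φ) (hφM : ∀ x, |φ x| ≤ M) (c ξ : ℝ) :
    IntegrableOn (fun t => w t * φ (ξ + c * t)) (Ioi 0) :=
  integrable_mul_comp_const_add hw (by fun_prop) hφ hφM ξ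

theorem mul_integral_Ioi_mul_deriv_comp_const_add_mul (hw : ∀ t ∈ Ici 0, HasDerivAt w (w' t) t)
    (hwi : IntegrableOn w (Ioi 0)) (hw'i : IntegrableOn w' (Ioi 0)) (hφ : Differentiable ℝ φ)
    (hφM : ∀ x, |φ x| ≤ M) (hφ'M : ∀ x, |deriv φ x| ≤ M') (c ξ : ℝ) :
    c * ∫ t in Ioi 0, w t * deriv φ (ξ + c * t)
      = -(w 0 * φ ξ) - ∫ t in Ioi 0, w' t * φ (ξ + c * t) := by
  set v : ℝ → ℝ := fun t => φ (ξ + c * t)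
  have hv : ∀ t, HasDerivAt v (deriv φ (ξ + c * t) * c) t := fun t =>
    (hφ _).hasDerivAt.comp t (by simpa using ((hasDerivAt_id t).const_mul c).const_add ξ)
  have hwv' : IntegrableOn (w * fun t => deriv φ (ξ + c * t) * c) (Ioi 0) := by
    simpa only [IntegrableOn, Pi.mul_def, ← mul_assoc] using
      (integrableOn_Ioi_mul_comp_const_add_mul hwi (measurable_deriv φ) hφ'M c ξ).mul_const c
  have hw'v : IntegrableOn (w' * v) (Ioi 0) :=
    integrableOn_Ioi_mul_comp_const_add_mul hw'i hφ.continuous.measurable hφM c ξ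
  have hwv : IntegrableOn (w * v) (Ioi 0) :=
    integrableOn_Ioi_mul_comp_const_add_mul hwi hφ.continuous.measurable hφM c ξ
  have hderiv : ∀ t ∈ Ioi 0,
      HasDerivAt (w * v) (w' t * v t + w t * (deriv φ (ξ + c * t) * c)) t :=
    fun t ht => (hw t (mem_Ici_of_Ioi ht)).mul (hv t)
  have h_zero : Tendsto (w * v) (𝓝[>] 0) (𝓝 (w 0 * φ ξ)) := by
    have := ((hw 0 self_mem_Ici).continuousAt.mul (hv 0).continuousAt).tendsto
    simpa [v] using this.mono_left nhdsWithin_le_nhds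
  have h_infty : Tendsto (w * v) atTop (𝓝 0) :=
    tendsto_zero_of_hasDerivAt_of_integrableOn_Ioi hderiv (hw'v.add hwv') hwv
  have hparts := integral_Ioi_mul_deriv_eq_deriv_mul (fun t ht => hw t (mem_Ici_of_Ioi ht))
    (fun t _ => hv t) hwv' hw'v h_zero h_infty
  rw [zero_sub] at hparts
  rw [← integral_const_mul, ← hparts]
  congr 1; ext t; ring

theorem hasDerivAt_integral_Ioi_mul_comp_const_add_mul (hc : c ≠ 0)
    (hw : ∀ t ∈ Ici 0, HasDerivAt w (w' t) t) (hwi : IntegrableOn w (Ioi 0))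
    (hw'i : IntegrableOn w' (Ioi 0)) (hφ : Differentiable ℝ φ) (hφM : ∀ x, |φ x| ≤ M)
    (hφ'M : ∀ x, |deriv φ x| ≤ M') (ξ : ℝ) :
    HasDerivAt (fun x => ∫ t in Ioi 0, w t * φ (x + c * t))
      ((-(w 0 * φ ξ) - ∫ t in Ioi 0, w' t * φ (ξ + c * t)) / c) ξ := by
  rw [← mul_integral_Ioi_mul_deriv_comp_const_add_mul hw hwi hw'i hφ hφM hφ'M,
    mul_div_cancel_left₀ _ hc]
  exact hasDerivAt_integral_mul_comp_const_add hwi (by fun_prop) hφ hφM hφ'M ξ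

end HalfLine

theorem hasDerivAt_exp_neg_two_mul_div (τ t : ℝ) :
    HasDerivAt (fun t => exp (-2 * t / τ)) (-(2 / τ) * exp (-2 * t / τ)) t := by
  have h : HasDerivAt (fun t => -2 * t / τ) (-2 / τ) t := by
    simpa using ((hasDerivAt_id t).const_mul (-2)).div_const τ
  exact h.exp.congr_deriv (by ring)

theorem integrableOn_exp_neg_two_mul_div {τ : ℝ} (hτ : 0 < τ) :
    IntegrableOn (fun t => exp (-2 * t / τ)) (Ioi 0) := by
  convert exp_neg_integrableOn_Ioi 0 (div_pos two_pos hτ) using 3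
  ring

theorem integrableOn_mul_exp_neg_two_mul_div {τ : ℝ} (hτ : 0 < τ) :
    IntegrableOn (fun t => t * exp (-2 * t / τ)) (Ioi 0) := by
  refine (integrableOn_rpow_mul_exp_neg_mul_rpow (s := 1) (p := 1) (by norm_num) one_pos
    (div_pos two_pos hτ)).congr_fun (fun t _ => ?_) measurableSet_Ioi
  simp only [rpow_one]; ring_nf

section ExponentialKernel

variable {c τ M M' : ℝ} {φ : ℝ → ℝ}

theorem hasDerivAt_integral_Ioi_exp_kernel (hc : c ≠ 0) (hτ : 0 < τ) (hφ : Differentiable ℝ φ)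
    (hφM : ∀ x, |φ x| ≤ M) (hφ'M : ∀ x, |deriv φ x| ≤ M') (ξ : ℝ) :
    HasDerivAt (fun x => ∫ t in Ioi 0, 4 / τ * exp (-2 * t / τ) * φ (x + c * t))
      (1 / (c * τ) * (2 * (∫ t in Ioi 0, 4 / τ * exp (-2 * t / τ) * φ (ξ + c * t))
        - 4 * φ ξ)) ξ := by
  have hwi := (integrableOn_exp_neg_two_mul_div hτ).const_mul (4 / τ)
  convert hasDerivAt_integral_Ioi_mul_comp_const_add_mul hc
    (w' := fun t => -(2 / τ) * (4 / τ * exp (-2 * t / τ)))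
    (fun t _ => (hasDerivAt_exp_neg_two_mul_div τ t).const_mul (4 / τ) |>.congr_deriv (by ring))
    hwi (hwi.const_mul _) hφ hφM hφ'M ξ using 1
  simp_rw [mul_assoc (-(2 / τ))]
  rw [integral_const_mul, mul_zero, zero_div, exp_zero, mul_one]
  field_simp
  ring

theorem hasDerivAt_integral_Ioi_mul_exp_kernel (hc : c ≠ 0) (hτ : 0 < τ)
    (hφ : Differentiable ℝ φ) (hφM : ∀ x, |φ x| ≤ M) (hφ'M : ∀ x, |deriv φ x| ≤ M') (ξ : ℝ) :
    HasDerivAt (fun x => ∫ t in Ioi 0, 4 * t / τ ^ 2 * exp (-2 * t / τ) * φ (x + c * t))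
      (1 / (c * τ) * (2 * (∫ t in Ioi 0, 4 * t / τ ^ 2 * exp (-2 * t / τ) * φ (ξ + c * t))
        - ∫ t in Ioi 0, 4 / τ * exp (-2 * t / τ) * φ (ξ + c * t))) ξ := by
  have hvi := (integrableOn_exp_neg_two_mul_div hτ).const_mul (4 / τ)
  have hwi : IntegrableOn (fun t => 4 * t / τ ^ 2 * exp (-2 * t / τ)) (Ioi 0) :=
    IntegrableOn.congr_fun ((integrableOn_mul_exp_neg_two_mul_div hτ).const_mul (4 / τ ^ 2))
      (fun t _ => by ring) measurableSet_Ioi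
  have hw : ∀ t, HasDerivAt (fun t => 4 * t / τ ^ 2 * exp (-2 * t / τ))
      (4 / τ * exp (-2 * t / τ) / τ - 2 / τ * (4 * t / τ ^ 2 * exp (-2 * t / τ))) t := fun t => by
    have h : HasDerivAt (fun t => 4 * t / τ ^ 2) (4 / τ ^ 2) t := by
      simpa using ((hasDerivAt_id t).const_mul 4).div_const (τ ^ 2)
    exact (h.mul (hasDerivAt_exp_neg_two_mul_div τ t)).congr_deriv (by ring)
  convert hasDerivAt_integral_Ioi_mul_comp_const_add_mul hc (fun t _ => hw t) hwi
    (by exact (hvi.div_const τ).sub (hwi.const_mul (2 / τ))) hφ hφM hφ'M ξ using 1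
  have hφm := hφ.continuous.measurable
  calc _ = (-(4 * 0 / τ ^ 2 * exp (-2 * 0 / τ) * φ ξ)
        - ∫ t in Ioi 0, 4 / τ * exp (-2 * t / τ) * φ (ξ + c * t) / τ
          - 2 / τ * (4 * t / τ ^ 2 * exp (-2 * t / τ) * φ (ξ + c * t))) / c := by
        rw [integral_sub ((integrableOn_Ioi_mul_comp_const_add_mul hvi hφm hφM c ξ).div_const τ)
          ((integrableOn_Ioi_mul_comp_const_add_mul hwi hφm hφM c ξ).const_mul _),
          integral_div, integral_const_mul]
        field_simp
        ring
    _ = _ := by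
        congr 3; ext t; ring

end ExponentialKernel

/-- with η(ξ) = ∫₀^∞ (4t/τ²)e^{-2t/τ} φ(ξ+ct) dt and
ζ(ξ) = ∫₀^∞ (4/τ)e^{-2t/τ} φ(ξ+ct) dt, one has η' = (1/(cτ))(2η - ζ) and
ζ' = (1/(cτ))(2ζ - 4φ). -/
theorem stmt_7 (c τ : ℝ) (hc : 0 < c) (hτ : 0 < τ)
    (φ : ℝ → ℝ) (hφ : ContDiff ℝ 1 φ)
    (hbd : ∃ M : ℝ, ∀ x, |φ x| ≤ M) (hbd' : ∃ M : ℝ, ∀ x, |deriv φ x| ≤ M)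
    (η ζ : ℝ → ℝ)
    (hη : ∀ ξ, η ξ = ∫ t in Set.Ioi (0 : ℝ),
      (4 * t / τ ^ 2) * Real.exp (-2 * t / τ) * φ (ξ + c * t))
    (hζ : ∀ ξ, ζ ξ = ∫ t in Set.Ioi (0 : ℝ),
      (4 / τ) * Real.exp (-2 * t / τ) * φ (ξ + c * t)) :
    ∀ ξ : ℝ,
      HasDerivAt η ((1 / (c * τ)) * (2 * η ξ - ζ ξ)) ξ ∧
      HasDerivAt ζ ((1 / (c * τ)) * (2 * ζ ξ - 4 * φ ξ)) ξ := by
  intro ξ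
  obtain ⟨M, hM⟩ := hbd
  obtain ⟨M', hM'⟩ := hbd'
  have hφd : Differentiable ℝ φ := hφ.differentiable one_ne_zero
  obtain rfl : η = _ := funext hη
  obtain rfl : ζ = _ := funext hζ
  exact ⟨hasDerivAt_integral_Ioi_mul_exp_kernel hc.ne' hτ hφd hM hM' ξ,
    hasDerivAt_integral_Ioi_exp_kernel hc.ne' hτ hφd hM hM' ξ⟩
end

section
/- With b = 1, a = -1, k = -1, the Melnikov integral M(c) = (2/c)∫₀^{3c/2} (-2cφ + 1)·√((−2φ³ + 3cφ²)/(3c)) dφ evaluates to M(c) = −(72/35)c³ + (6/5)c for all c > 0. -/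
/-! Writing `a = 3c`, the radicand is `φ² (a - 2φ) / a`, so on `[0, a/2]` the integrand is
`(pφ + q) φ √(a - 2φ) / √a`. The moments `∫ φᵏ √(a - 2φ)` (`k = 1, 2`) have antiderivatives of the form
`√(a - 2φ) (a - 2φ) · (polynomial)`, obtained by substituting `u = a - 2φ`. -/

open Real intervalIntegral

lemma hasDerivAt_sqrt_sub_two_mul {a x : ℝ} (hx : 2 * x < a) :
    HasDerivAt (fun y => √(a - 2 * y)) (-1 / √(a - 2 * x)) x := by
  have hlin : HasDerivAt (fun y => a - 2 * y) (-2) x := by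
    simpa using ((hasDerivAt_id x).const_mul 2).const_sub a
  convert hlin.sqrt (by linarith) using 1
  field_simp

lemma integral_mul_sqrt_sub_two_mul {a : ℝ} (ha : 0 ≤ a) :
    ∫ x in (0 : ℝ)..a / 2, x * √(a - 2 * x) = √a * a ^ 2 / 15 := by
  have hF : ∀ x ∈ Set.Ioo 0 (a / 2),
      HasDerivAt (fun y => -(√(a - 2 * y) * (a - 2 * y) * (a + 3 * y)) / 15)
        (x * √(a - 2 * x)) x := by
    intro x ⟨_, hx⟩
    have hpos : 0 < √(a - 2 * x) := sqrt_pos.mpr (by linarith)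
    have hsq : √(a - 2 * x) ^ 2 = a - 2 * x := sq_sqrt (by linarith)
    have := ((((hasDerivAt_sqrt_sub_two_mul (by linarith : 2 * x < a)).mul
      (((hasDerivAt_id x).const_mul 2).const_sub a)).mul
      (((hasDerivAt_id x).const_mul 3).const_add a)).neg).div_const 15
    refine this.congr_deriv ?_
    simp only [id, Pi.mul_apply]
    field_simp
    rw [hsq]
    ring
  rw [integral_eq_sub_of_hasDerivAt_of_le (by linarith) (by fun_prop) hF
    (by apply Continuous.intervalIntegrable; fun_prop)]
  norm_num
  ring

lemma integral_sq_mul_sqrt_sub_two_mul {a : ℝ} (ha : 0 ≤ a) :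
    ∫ x in (0 : ℝ)..a / 2, x ^ 2 * √(a - 2 * x) = 2 * √a * a ^ 3 / 105 := by
  have hF : ∀ x ∈ Set.Ioo 0 (a / 2),
      HasDerivAt (fun y => -(√(a - 2 * y) * (a - 2 * y) * (2 * a ^ 2 + 6 * a * y + 15 * y ^ 2)) / 105)
        (x ^ 2 * √(a - 2 * x)) x := by
    intro x ⟨_, hx⟩
    have hpos : 0 < √(a - 2 * x) := sqrt_pos.mpr (by linarith)
    have hsq : √(a - 2 * x) ^ 2 = a - 2 * x := sq_sqrt (by linarith)
    have := ((((hasDerivAt_sqrt_sub_two_mul (by linarith : 2 * x < a)).mul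
      (((hasDerivAt_id x).const_mul 2).const_sub a)).mul
      ((((hasDerivAt_id x).const_mul (6 * a)).const_add (2 * a ^ 2)).add
        ((hasDerivAt_pow 2 x).const_mul 15))).neg).div_const 105
    refine this.congr_deriv ?_
    simp only [id, Pi.mul_apply, Pi.add_apply]
    field_simp
    rw [hsq]
    ring
  rw [integral_eq_sub_of_hasDerivAt_of_le (by linarith) (by fun_prop) hF
    (by apply Continuous.intervalIntegrable; fun_prop)]
  norm_num
  ring

lemma sqrt_cubic_div_eq {a x : ℝ} (ha : 0 ≤ a) (hx : 0 ≤ x) :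
    √((-2 * x ^ 3 + a * x ^ 2) / a) = x * √(a - 2 * x) / √a := by
  rw [show (-2 * x ^ 3 + a * x ^ 2) / a = x ^ 2 * ((a - 2 * x) / a) by ring,
    sqrt_mul (sq_nonneg x), sqrt_sq hx, sqrt_div' _ ha, mul_div_assoc]

lemma integral_linear_mul_sqrt_cubic_div {a : ℝ} (ha : 0 < a) (p q : ℝ) :
    ∫ x in (0 : ℝ)..a / 2, (p * x + q) * √((-2 * x ^ 3 + a * x ^ 2) / a)
      = 2 * p * a ^ 3 / 105 + q * a ^ 2 / 15 := by
  have hsqrt : √a ≠ 0 := by positivity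
  have hcongr : Set.EqOn (fun x => (p * x + q) * √((-2 * x ^ 3 + a * x ^ 2) / a))
      (fun x => p / √a * (x ^ 2 * √(a - 2 * x)) + q / √a * (x * √(a - 2 * x)))
      (Set.uIcc 0 (a / 2)) := by
    intro x hx
    rw [Set.uIcc_of_le (by positivity)] at hx
    simp only [sqrt_cubic_div_eq ha.le hx.1]
    ring
  rw [integral_congr hcongr, integral_add (by apply Continuous.intervalIntegrable; fun_prop)
    (by apply Continuous.intervalIntegrable; fun_prop), integral_const_mul, integral_const_mul,
    integral_sq_mul_sqrt_sub_two_mul ha.le, integral_mul_sqrt_sub_two_mul ha.le]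
  field_simp

/-- with b = 1, a = -1, k = -1, the local-delay Melnikov integral
evaluates to −(72/35)c³ + (6/5)c for all c > 0. -/
theorem stmt_10 (c : ℝ) (hc : 0 < c) :
    (2 / c) * ∫ φ in (0 : ℝ)..(3 * c / 2),
        (-2 * c * φ + 1) * Real.sqrt ((-2 * φ ^ 3 + 3 * c * φ ^ 2) / (3 * c))
      = -(72 / 35) * c ^ 3 + (6 / 5) * c := by
  rw [integral_linear_mul_sqrt_cubic_div (by positivity) (-2 * c) 1]
  field_simp
  ring
end
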